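/- arXiv:1808.05362 — 2 statements merged into one kernel-verified Lean document; each statement's English description precedes it below -/
import Mathlib

section
/- Let x be a random variable with lim_{τ→∞} τ^4 P(|x| > τ) = 0, and let η_n → 0 with η_n n^{1/5} → ∞. Then the fourth moment of the truncated variable satisfies E[|x·1(|x|<η_n√n)|^4] = o(log n) as n → ∞. -/
/-!
By the layer cake formula, `E[Y⁴] = ∫₀^M P(Y⁴ > s) ds` for the truncated variable `Y`,
where `M = n²` bounds `Y⁴` once `η_n ≤ 1`. Bounding the probability by `1` on `[0, S]`
and, via the tail hypothesis, by `δ / s` on `[S, M]` gives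
`E[Y⁴] ≤ S + δ log (n² / S) ≤ S + 2 δ log n`,
and `δ` can be made arbitrarily small by taking `S` large.
-/

open MeasureTheory Filter Topology Asymptotics

open Set in
theorem integral_le_of_mul_measureReal_lt_le {α : Type*} [MeasurableSpace α] {μ : Measure α}
    [IsProbabilityMeasure μ] {f : α → ℝ} {S M δ : ℝ} (hS : 0 < S) (hSM : S ≤ M)
    (hf0 : ∀ a, 0 ≤ f a) (hfM : ∀ a, f a ≤ M)
    (htail : ∀ s, S ≤ s → s * μ.real {a | s < f a} ≤ δ) :
    ∫ a, f a ∂μ ≤ S + δ * Real.log (M / S) := by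
  have hδ : 0 ≤ δ := (mul_nonneg hS.le measureReal_nonneg).trans (htail S le_rfl)
  by_cases hint : Integrable f μ
  swap
  · rw [integral_undef hint]
    have : 0 ≤ Real.log (M / S) := Real.log_nonneg ((one_le_div hS).2 hSM)
    positivity
  set F : ℝ → ℝ := fun t => μ.real {a | t < f a}
  have hF : Antitone F := fun s t hst => measureReal_mono fun a ha => hst.trans_lt ha
  have hF_vanish : ∀ t, M < t → F t = 0 := fun t ht => by
    have hempty : {a | t < f a} = ∅ :=
      eq_empty_of_forall_notMem fun a (ha : t < f a) => (ha.trans_le (hfM a)).not_gt ht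
    simp only [F, hempty, measureReal_empty]
  have hlow : ∫ t in (0)..S, F t ≤ S := by
    calc ∫ t in (0)..S, F t ≤ ∫ t in (0)..S, (1 : ℝ) :=
          intervalIntegral.integral_mono_on hS.le hF.intervalIntegrable intervalIntegrable_const
            fun t _ => measureReal_le_one
      _ = S := by simp
  have hhigh : ∫ t in S..M, F t ≤ δ * Real.log (M / S) := by
    calc ∫ t in S..M, F t ≤ ∫ t in S..M, δ * t⁻¹ := by
          refine intervalIntegral.integral_mono_on hSM hF.intervalIntegrable ?_ fun t ht => ?_
          · refine (ContinuousOn.intervalIntegrable ?_).const_mul δ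
            exact continuousOn_inv₀.mono fun t ht => by
              rw [uIcc_of_le hSM] at ht; exact (hS.trans_le ht.1).ne'
          · rw [← div_eq_mul_inv, le_div_iff₀ (hS.trans_le ht.1), mul_comm]
            exact htail t ht.1
      _ = δ * Real.log (M / S) := by
          rw [intervalIntegral.integral_const_mul, integral_inv_of_pos hS (hS.trans_le hSM)]
  calc ∫ a, f a ∂μ = ∫ t in Ioi 0, F t := hint.integral_eq_integral_meas_lt (ae_of_all _ hf0)
    _ = ∫ t in (0)..M, F t := by
        rw [intervalIntegral.integral_of_le (hS.le.trans hSM)]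
        refine setIntegral_eq_of_subset_of_ae_sdiff_eq_zero nullMeasurableSet_Ioi
          Ioc_subset_Ioi_self (ae_of_all _ fun t ht => hF_vanish t ?_)
        exact not_le.1 fun htM => ht.2 ⟨ht.1, htM⟩
    _ = (∫ t in (0)..S, F t) + ∫ t in S..M, F t :=
        (intervalIntegral.integral_add_adjacent_intervals hF.intervalIntegrable
          hF.intervalIntegrable).symm
    _ ≤ S + δ * Real.log (M / S) := add_le_add hlow hhigh

theorem tendsto_mul_measureReal_lt_pow {Ω : Type*} [MeasurableSpace Ω] {μ : Measure Ω}
    {x : Ω → ℝ} {p : ℕ} (hp : p ≠ 0)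
    (hx : Tendsto (fun τ : ℝ => τ ^ p * μ.real {ω | τ < |x ω|}) atTop (𝓝 0)) :
    Tendsto (fun s : ℝ => s * μ.real {ω | s < |x ω| ^ p}) atTop (𝓝 0) := by
  refine (hx.comp (tendsto_rpow_atTop (by positivity : (0 : ℝ) < (p : ℝ)⁻¹))).congr' ?_
  filter_upwards [eventually_ge_atTop 0] with s hs
  have hroot : ∀ ω, s ^ (p : ℝ)⁻¹ < |x ω| ↔ s < |x ω| ^ p := fun ω => by
    rw [← pow_lt_pow_iff_left₀ (by positivity) (abs_nonneg _) hp,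
      Real.rpow_inv_natCast_pow hs hp]
  simp only [Function.comp_apply, Real.rpow_inv_natCast_pow hs hp, hroot]

theorem abs_ite_abs_lt_le_abs (a c : ℝ) : |if |a| < c then a else 0| ≤ |a| := by
  split_ifs <;> simp

theorem abs_ite_abs_lt_le {a b c : ℝ} (hcb : c ≤ b) (hb : 0 ≤ b) :
    |if |a| < c then a else 0| ≤ b := by
  split_ifs with h
  · exact h.le.trans hcb
  · simpa using hb

theorem integral_abs_ite_abs_lt_pow_le {Ω : Type*} [MeasurableSpace Ω] {μ : Measure Ω}
    [IsProbabilityMeasure μ] {x : Ω → ℝ} {p : ℕ} {b c S δ : ℝ} (hS : 0 < S)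
    (hSb : S ≤ b ^ p) (hb : 0 ≤ b) (hcb : c ≤ b)
    (htail : ∀ s ≥ S, s * μ.real {ω | s < |x ω| ^ p} ≤ δ) :
    ∫ ω, |if |x ω| < c then x ω else 0| ^ p ∂μ ≤ S + δ * Real.log (b ^ p / S) := by
  refine integral_le_of_mul_measureReal_lt_le hS hSb (fun ω => by positivity)
    (fun ω => pow_le_pow_left₀ (abs_nonneg _) (abs_ite_abs_lt_le hcb hb) p) fun s hs => ?_
  refine (mul_le_mul_of_nonneg_left (measureReal_mono fun ω hω => ?_) (by linarith)).trans
    (htail s hs)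
  exact hω.trans_le (pow_le_pow_left₀ (abs_nonneg _) (abs_ite_abs_lt_le_abs _ _) p)

theorem truncated_fourth_moment_general {Ω : Type*} [MeasurableSpace Ω] (μ : Measure Ω)
    [IsProbabilityMeasure μ] (x : Ω → ℝ)
    (hx : Tendsto (fun τ : ℝ => τ ^ 4 * (μ {ω | τ < |x ω|}).toReal) atTop (𝓝 0))
    (η : ℕ → ℝ) (hη0 : Tendsto η atTop (𝓝 0)) :
    (fun n : ℕ => ∫ ω, |if |x ω| < η n * Real.sqrt n then x ω else 0| ^ 4 ∂μ)
      =o[atTop] (fun n : ℕ => Real.log n) := by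
  rw [isLittleO_iff]
  intro ε hε
  obtain ⟨S, hS1, hS⟩ : ∃ S ≥ 1, ∀ s ≥ S, s * μ.real {ω | s < |x ω| ^ 4} ≤ ε / 4 := by
    obtain ⟨S₀, hS₀⟩ := ((tendsto_mul_measureReal_lt_pow four_ne_zero hx).eventually
      (ge_mem_nhds (by positivity : (0 : ℝ) < ε / 4))).exists_forall_of_atTop
    exact ⟨max S₀ 1, le_max_right _ _, fun s hs => hS₀ s (le_of_max_le_left hs)⟩
  have hsqrt : Tendsto (fun n : ℕ => Real.sqrt n ^ 4) atTop atTop :=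
    (tendsto_pow_atTop four_ne_zero).comp
      (Real.tendsto_sqrt_atTop.comp tendsto_natCast_atTop_atTop)
  have hlog : Tendsto (fun n : ℕ => Real.log n) atTop atTop :=
    Real.tendsto_log_atTop.comp tendsto_natCast_atTop_atTop
  filter_upwards [hη0.eventually (gt_mem_nhds one_pos), hsqrt.eventually_ge_atTop S,
    hlog.eventually_ge_atTop (2 * S / ε)] with n hηn hnS hlogn
  have hmoment := integral_abs_ite_abs_lt_pow_le (μ := μ) (by linarith) hnS
    (Real.sqrt_nonneg _) (mul_le_of_le_one_left (Real.sqrt_nonneg _) hηn.le) hS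
  have hlog_le : Real.log (Real.sqrt n ^ 4 / S) ≤ 2 * Real.log n := by
    calc Real.log (Real.sqrt n ^ 4 / S) ≤ Real.log (Real.sqrt n ^ 4) :=
          Real.log_le_log (div_pos (by linarith) (by linarith)) (div_le_self (by positivity) hS1)
      _ = 2 * Real.log n := by rw [Real.log_pow, Real.log_sqrt (Nat.cast_nonneg n)]; ring
  rw [Real.norm_of_nonneg (integral_nonneg fun ω => by positivity),
    Real.norm_of_nonneg (Real.log_natCast_nonneg n)]
  rw [div_le_iff₀ hε] at hlogn
  calc _ ≤ S + ε / 4 * Real.log (Real.sqrt n ^ 4 / S) := hmoment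
    _ ≤ S + ε / 4 * (2 * Real.log n) := by gcongr
    _ ≤ ε * Real.log n := by linarith

/-- For a random variable with tail `τ^4 P(|x|>τ) → 0` and truncation at `η_n √n`
(`η_n → 0`, `η_n n^{1/5} → ∞`), the fourth moment of the truncated variable is `o(log n)`. -/
theorem truncated_fourth_moment {Ω : Type*} [MeasurableSpace Ω] (μ : Measure Ω)
    [IsProbabilityMeasure μ] (x : Ω → ℝ)
    (hx : Tendsto (fun τ : ℝ => τ ^ 4 * (μ {ω | τ < |x ω|}).toReal) atTop (𝓝 0))
    (η : ℕ → ℝ) (hη0 : Tendsto η atTop (𝓝 0))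
    (hη : Tendsto (fun n : ℕ => η n * (n : ℝ) ^ ((1 : ℝ) / 5)) atTop atTop) :
    (fun n : ℕ => ∫ ω, |if |x ω| < η n * Real.sqrt n then x ω else 0| ^ 4 ∂μ)
      =o[atTop] (fun n : ℕ => Real.log n) :=
  truncated_fourth_moment_general μ x hx η hη0
end

section
/- Let x be a random variable with lim_{τ→∞} τ^4 P(|x| > τ) = 0, and let η_n → 0 with η_n n^{1/5} → ∞. Then for any integer α > 4, E[|x|^α · 1(|x| < η_n√n)] = o((√n)^{α−4}) as n → ∞. -/
open MeasureTheory Filter Topology Asymptotics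

/-!
By the layer-cake formula, `E[f ^ α] = ∫₀^∞ α t^(α-1) P(f > t) dt` for the truncated variable
`f = |x| 1(|x| < c)`, and `f ≤ C` kills the range `t > C`. Given `ε`, the tail hypothesis yields `τ`
with `P(|x| > t) ≤ ε / t⁴` for `t ≥ τ`. The range `(0, τ]` then contributes at most `α τ^α`, a
constant, and `(τ, C]` at most `α ε C^(α-4)`. Since `η_n ≤ 1` eventually, `C = √n` is admissible
for `c = η_n √n`, and `ε` is arbitrary.
-/

open Set

section TailBounds

variable {Ω : Type*} [MeasurableSpace Ω] {μ : Measure Ω}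

theorem lintegral_ofReal_pow_eq_lintegral_meas_lt_mul {f : Ω → ℝ} (hf0 : 0 ≤ᵐ[μ] f)
    (hf : AEMeasurable f μ) {n : ℕ} (hn : n ≠ 0) :
    ∫⁻ ω, ENNReal.ofReal (f ω ^ n) ∂μ =
      ∫⁻ t in Ioi 0, μ {ω | t < f ω} * ENNReal.ofReal (n * t ^ (n - 1)) := by
  have hantideriv : ∀ s : ℝ, ∫ t in (0 : ℝ)..s, (n : ℝ) * t ^ (n - 1) = s ^ n := by
    intro s
    rw [intervalIntegral.integral_const_mul, integral_pow, Nat.sub_add_cancel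
      (Nat.one_le_iff_ne_zero.2 hn), zero_pow hn, sub_zero, Nat.cast_pred (Nat.pos_of_ne_zero hn),
      sub_add_cancel, mul_div_cancel₀ _ (Nat.cast_ne_zero.2 hn)]
  have := lintegral_comp_eq_lintegral_meas_lt_mul μ hf0 hf (g := fun t => n * t ^ (n - 1))
    (fun t _ => (continuous_const.mul (continuous_pow _)).intervalIntegrable 0 t)
    ((ae_restrict_iff' measurableSet_Ioi).2 (ae_of_all _ fun t (ht : 0 < t) => by positivity))
  simpa only [hantideriv] using this

theorem setLIntegral_Ioc_meas_lt_mul_pow_le [IsProbabilityMeasure μ] (f : Ω → ℝ) {n : ℕ}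
    (hn : n ≠ 0) {τ : ℝ} (hτ : 0 ≤ τ) :
    ∫⁻ t in Ioc 0 τ, μ {ω | t < f ω} * ENNReal.ofReal (n * t ^ (n - 1)) ≤
      ENNReal.ofReal (n * τ ^ n) := by
  calc ∫⁻ t in Ioc 0 τ, μ {ω | t < f ω} * ENNReal.ofReal (n * t ^ (n - 1))
      ≤ ∫⁻ _ in Ioc 0 τ, ENNReal.ofReal (n * τ ^ (n - 1)) := by
        refine setLIntegral_mono' measurableSet_Ioc fun t ⟨ht0, htτ⟩ => ?_
        calc μ {ω | t < f ω} * ENNReal.ofReal (n * t ^ (n - 1))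
            ≤ 1 * ENNReal.ofReal (n * τ ^ (n - 1)) := by gcongr; exact prob_le_one
          _ = ENNReal.ofReal (n * τ ^ (n - 1)) := one_mul _
    _ = ENNReal.ofReal (n * τ ^ n) := by
        rw [setLIntegral_const, Real.volume_Ioc, sub_zero, ← ENNReal.ofReal_mul (by positivity),
          mul_assoc, ← pow_succ, Nat.sub_add_cancel (Nat.one_le_iff_ne_zero.2 hn)]

theorem setLIntegral_Ioc_meas_lt_mul_pow_le_of_tail (f : Ω → ℝ) {k n : ℕ} (hkn : k < n)
    {ε τ C : ℝ} (hε : 0 ≤ ε) (hτ : 0 < τ) (hC : 0 ≤ C)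
    (htail : ∀ t, τ ≤ t → μ {ω | t < f ω} ≤ ENNReal.ofReal (ε / t ^ k)) :
    ∫⁻ t in Ioc τ C, μ {ω | t < f ω} * ENNReal.ofReal (n * t ^ (n - 1)) ≤
      ENNReal.ofReal (n * ε * C ^ (n - k)) := by
  calc ∫⁻ t in Ioc τ C, μ {ω | t < f ω} * ENNReal.ofReal (n * t ^ (n - 1))
      ≤ ∫⁻ _ in Ioc τ C, ENNReal.ofReal (n * ε * C ^ (n - 1 - k)) := by
        refine setLIntegral_mono' measurableSet_Ioc fun t ⟨hτt, htC⟩ => ?_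
        have ht : 0 < t := hτ.trans hτt
        have hsplit : t ^ (n - 1) = t ^ (n - 1 - k) * t ^ k := by
          rw [← pow_add, Nat.sub_add_cancel (by omega)]
        calc μ {ω | t < f ω} * ENNReal.ofReal (n * t ^ (n - 1))
            ≤ ENNReal.ofReal (ε / t ^ k) * ENNReal.ofReal (n * t ^ (n - 1)) := by
              gcongr; exact htail t hτt.le
          _ = ENNReal.ofReal (n * ε * t ^ (n - 1 - k)) := by
              rw [← ENNReal.ofReal_mul (by positivity), hsplit]
              congr 1
              field_simp
          _ ≤ ENNReal.ofReal (n * ε * C ^ (n - 1 - k)) := by gcongr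
    _ ≤ ENNReal.ofReal (n * ε * C ^ (n - k)) := by
        rw [setLIntegral_const, Real.volume_Ioc, ← ENNReal.ofReal_mul (by positivity)]
        refine ENNReal.ofReal_le_ofReal ?_
        calc n * ε * C ^ (n - 1 - k) * (C - τ) ≤ n * ε * C ^ (n - 1 - k) * C := by
              gcongr; linarith
          _ = n * ε * C ^ (n - k) := by
              rw [mul_assoc _ _ C, ← pow_succ]
              congr 3
              omega

theorem lintegral_ofReal_pow_le_of_tail_le [IsProbabilityMeasure μ] {f : Ω → ℝ} (hf0 : 0 ≤ f)
    (hf : AEMeasurable f μ) {k n : ℕ} (hkn : k < n) {ε τ C : ℝ} (hε : 0 ≤ ε) (hτ : 0 < τ)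
    (hC : 0 ≤ C) (hfC : ∀ ω, f ω ≤ C)
    (htail : ∀ t, τ ≤ t → μ {ω | t < f ω} ≤ ENNReal.ofReal (ε / t ^ k)) :
    ∫⁻ ω, ENNReal.ofReal (f ω ^ n) ∂μ ≤ ENNReal.ofReal (n * τ ^ n + n * ε * C ^ (n - k)) := by
  have hn : n ≠ 0 := by omega
  have hcover : Ioi (0 : ℝ) ⊆ (Ioc 0 τ ∪ Ioc τ C) ∪ Ioi C := by
    intro t (ht : 0 < t)
    rcases le_or_gt t τ with htτ | hτt
    · exact Or.inl (Or.inl ⟨ht, htτ⟩)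
    rcases le_or_gt t C with htC | hCt
    · exact Or.inl (Or.inr ⟨hτt, htC⟩)
    · exact Or.inr hCt
  have hbeyond : ∫⁻ t in Ioi C, μ {ω | t < f ω} * ENNReal.ofReal (n * t ^ (n - 1)) = 0 := by
    refine (setLIntegral_congr_fun measurableSet_Ioi fun t (hCt : C < t) => ?_).trans
      lintegral_zero
    have hempty : {ω | t < f ω} = ∅ :=
      eq_empty_of_forall_notMem fun ω (h : t < f ω) => (hfC ω).not_gt (hCt.trans h)
    rw [hempty, measure_empty, zero_mul]
  rw [lintegral_ofReal_pow_eq_lintegral_meas_lt_mul (ae_of_all μ hf0) hf hn,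
    ENNReal.ofReal_add (by positivity) (by positivity)]
  refine (lintegral_mono_set hcover).trans <| (lintegral_union_le _ _ _).trans ?_
  rw [hbeyond, add_zero]
  exact (lintegral_union_le _ _ _).trans <| add_le_add (setLIntegral_Ioc_meas_lt_mul_pow_le f hn hτ.le)
        (setLIntegral_Ioc_meas_lt_mul_pow_le_of_tail f hkn hε hτ hC htail)


theorem exists_meas_lt_le_of_tendsto_pow_mul [IsFiniteMeasure μ] {g : Ω → ℝ} {k : ℕ}
    (hg : Tendsto (fun τ : ℝ => τ ^ k * (μ {ω | τ < g ω}).toReal) atTop (𝓝 0)) {ε : ℝ}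
    (hε : 0 < ε) : ∃ τ > 0, ∀ t, τ ≤ t → μ {ω | t < g ω} ≤ ENNReal.ofReal (ε / t ^ k) := by
  obtain ⟨τ, hτ⟩ := eventually_atTop.1 ((hg.eventually_le_const hε).and (eventually_gt_atTop 0))
  refine ⟨τ, (hτ τ le_rfl).2, fun t ht => ?_⟩
  obtain ⟨hle, ht0⟩ := hτ t ht
  rw [ENNReal.le_ofReal_iff_toReal_le (measure_ne_top μ _) (by positivity),
    le_div_iff₀ (by positivity), mul_comm]
  exact hle

theorem integral_ite_abs_lt_pow_le [IsProbabilityMeasure μ] (x : Ω → ℝ) {k n : ℕ} (hkn : k < n)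
    {ε τ c C : ℝ} (hε : 0 ≤ ε) (hτ : 0 < τ) (hC : 0 ≤ C) (hcC : c ≤ C)
    (htail : ∀ t, τ ≤ t → μ {ω | t < |x ω|} ≤ ENNReal.ofReal (ε / t ^ k)) :
    ∫ ω, (if |x ω| < c then |x ω| ^ n else 0) ∂μ ≤ n * τ ^ n + n * ε * C ^ (n - k) := by
  have hn : n ≠ 0 := by omega
  set f : Ω → ℝ := fun ω => if |x ω| < c then |x ω| else 0
  have hf0 : 0 ≤ f := fun ω => by dsimp [f]; split_ifs <;> positivity
  have hfC : ∀ ω, f ω ≤ C := fun ω => by dsimp [f]; split_ifs with h <;> linarith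
  have hfx : ∀ ω, f ω ≤ |x ω| := fun ω => by dsimp [f]; split_ifs <;> simp
  have hpow : (fun ω => if |x ω| < c then |x ω| ^ n else 0) = fun ω => f ω ^ n := by
    funext ω; dsimp [f]; split_ifs <;> simp [hn]
  rw [hpow]
  by_cases hint : Integrable (fun ω => f ω ^ n) μ
  swap
  · rw [integral_undef hint]; positivity
  -- `x` need not be measurable, but `f = (f ^ n) ^ (1 / n)` inherits measurability from `f ^ n`.
  have hf : AEMeasurable f μ := by
    have hroot : f = fun ω => (f ω ^ n) ^ ((n : ℝ)⁻¹) :=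
      funext fun ω => (Real.pow_rpow_inv_natCast (hf0 ω) hn).symm
    rw [hroot]
    exact (Real.continuous_rpow_const (by positivity)).measurable.comp_aemeasurable
      hint.aemeasurable
  rw [integral_eq_lintegral_of_nonneg_ae (ae_of_all μ fun ω => pow_nonneg (hf0 ω) n)
    hint.aestronglyMeasurable]
  refine ENNReal.toReal_le_of_le_ofReal (by positivity) ?_
  exact lintegral_ofReal_pow_le_of_tail_le hf0 hf hkn hε hτ hC hfC fun t ht =>
    (measure_mono fun ω (h : t < f ω) => h.trans_le (hfx ω)).trans (htail t ht)

end TailBounds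

theorem truncated_high_moments_general {Ω : Type*} [MeasurableSpace Ω] (μ : Measure Ω)
    [IsProbabilityMeasure μ] (x : Ω → ℝ)
    (hx : Tendsto (fun τ : ℝ => τ ^ 4 * (μ {ω | τ < |x ω|}).toReal) atTop (𝓝 0))
    (η : ℕ → ℝ) (hη0 : Tendsto η atTop (𝓝 0))
    (α : ℕ) (hα : 4 < α) :
    (fun n : ℕ => ∫ ω, (if |x ω| < η n * Real.sqrt n then |x ω| ^ α else 0) ∂μ)
      =o[atTop] (fun n : ℕ => Real.sqrt n ^ ((α : ℤ) - 4)) := by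
  rw [isLittleO_iff]
  intro ε hε
  obtain ⟨τ, hτ, htail⟩ := exists_meas_lt_le_of_tendsto_pow_mul hx (ε := ε / (2 * α))
    (by positivity)
  have hsqrt : Tendsto (fun n : ℕ => Real.sqrt n ^ (α - 4)) atTop atTop :=
    (tendsto_pow_atTop (by omega)).comp (Real.tendsto_sqrt_atTop.comp tendsto_natCast_atTop_atTop)
  filter_upwards [hsqrt.eventually_ge_atTop (2 * α * τ ^ α / ε), hη0.eventually_le_const one_pos]
    with n hn hηn
  have hc : η n * Real.sqrt n ≤ Real.sqrt n := mul_le_of_le_one_left (Real.sqrt_nonneg _) hηn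
  have hzpow : Real.sqrt n ^ ((α : ℤ) - 4) = Real.sqrt n ^ (α - 4) := by
    rw [← Nat.cast_ofNat, ← Nat.cast_sub hα.le, zpow_natCast]
  rw [hzpow, Real.norm_of_nonneg (integral_nonneg fun ω => by dsimp only; split_ifs <;> positivity),
    Real.norm_of_nonneg (by positivity)]
  calc _ ≤ α * τ ^ α + α * (ε / (2 * α)) * Real.sqrt n ^ (α - 4) :=
        integral_ite_abs_lt_pow_le x hα (by positivity) hτ (Real.sqrt_nonneg _) hc htail
    _ ≤ ε * Real.sqrt n ^ (α - 4) := by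
        rw [div_le_iff₀ hε] at hn
        have hα0 : (0 : ℝ) < α := by positivity
        field_simp
        linarith

/-- For a random variable with tail `τ^4 P(|x|>τ) → 0` and truncation at `η_n √n`
(`η_n → 0`, `η_n n^{1/5} → ∞`), for any integer `α > 4`,
`E[|x|^α 1(|x| < η_n √n)] = o((√n)^(α-4))`. -/
theorem truncated_high_moments {Ω : Type*} [MeasurableSpace Ω] (μ : Measure Ω)
    [IsProbabilityMeasure μ] (x : Ω → ℝ)
    (hx : Tendsto (fun τ : ℝ => τ ^ 4 * (μ {ω | τ < |x ω|}).toReal) atTop (𝓝 0))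
    (η : ℕ → ℝ) (hη0 : Tendsto η atTop (𝓝 0))
    (hη : Tendsto (fun n : ℕ => η n * (n : ℝ) ^ ((1 : ℝ) / 5)) atTop atTop)
    (α : ℕ) (hα : 4 < α) :
    (fun n : ℕ => ∫ ω, (if |x ω| < η n * Real.sqrt n then |x ω| ^ α else 0) ∂μ)
      =o[atTop] (fun n : ℕ => Real.sqrt n ^ ((α : ℤ) - 4)) :=
  truncated_high_moments_general μ x hx η hη0 α hα
end
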